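/- arXiv:2202.12989 — 10 statements merged into one kernel-verified Lean document; each statement's English description precedes it below -/
import Mathlib

section
/- Finite-sample control of the generalized familywise error rate by the augmented selection procedure: let (Ω, F, P) be a probability space, let p, k be natural numbers, let N ⊆ Fin p be a fixed set (the null indices), and let S, A : Ω → Finset (Fin p) be measurable maps such that the cardinality of A(ω) is at most k for every ω ∈ Ω. If P({ω : S(ω) ∩ N ≠ ∅}) ≤ α for some α ∈ [0,1], then P({ω : |(S(ω) ∪ A(ω)) ∩ N| ≥ k + 1}) ≤ α. -/
open MeasureTheory

theorem Finset.card_union_inter_le_of_inter_eq_empty {α : Type*} [DecidableEq α]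
    {s t u : Finset α} (h : s ∩ u = ∅) : ((s ∪ t) ∩ u).card ≤ t.card := by
  rw [Finset.union_inter_distrib_right, h, Finset.empty_union]
  exact Finset.card_le_card Finset.inter_subset_left

theorem gfwer_finite_sample_general
    {Ω : Type*} [MeasurableSpace Ω] (P : Measure Ω)
    (p k : ℕ) (N : Finset (Fin p)) (S A : Ω → Finset (Fin p))
    (hAk : ∀ ω, (A ω).card ≤ k)
    (α : ℝ)
    (hfwer : P {ω | S ω ∩ N ≠ ∅} ≤ ENNReal.ofReal α) :
    P {ω | k + 1 ≤ ((S ω ∪ A ω) ∩ N).card} ≤ ENNReal.ofReal α := by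
  refine (measure_mono ?_).trans hfwer
  intro ω (hω : k + 1 ≤ _) (hSN : S ω ∩ N = ∅)
  have hcard := (Finset.card_union_inter_le_of_inter_eq_empty (t := A ω) hSN).trans (hAk ω)
  omega

/-- Finite-sample control of the generalized familywise error rate by the augmented
selection procedure: if the initial selection `S` makes a type I error (selects some
null index in `N`) with probability at most `α`, and the augmentation set `A` always
has at most `k` elements, then the probability that the augmented selection `S ∪ A`
contains at least `k + 1` null indices is at most `α`. -/
theorem gfwer_finite_sample
    {Ω : Type*} [MeasurableSpace Ω] (P : Measure Ω) [IsProbabilityMeasure P]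
    (p k : ℕ) (N : Finset (Fin p)) (S A : Ω → Finset (Fin p))
    (hS : @Measurable Ω (Finset (Fin p)) _ ⊤ S)
    (hA : @Measurable Ω (Finset (Fin p)) _ ⊤ A)
    (hAk : ∀ ω, (A ω).card ≤ k)
    (α : ℝ) (hα : α ∈ Set.Icc (0 : ℝ) 1)
    (hfwer : P {ω | S ω ∩ N ≠ ∅} ≤ ENNReal.ofReal α) :
    P {ω | k + 1 ≤ ((S ω ∪ A ω) ∩ N).card} ≤ ENNReal.ofReal α :=
  gfwer_finite_sample_general P p k N S A hAk α hfwer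
end

section
/- Finite-sample control of the proportion of false positives by the augmented selection procedure: let (Ω, F, P) be a probability space, p a natural number, q ∈ (0,1), N ⊆ Fin p a fixed set (the null indices), and S, A : Ω → Finset (Fin p) measurable maps such that for every ω, A(ω) ∩ S(ω) = ∅ and |A(ω)| ≤ q · (|A(ω)| + |S(ω)|). If P({ω : S(ω) ∩ N ≠ ∅}) ≤ α for some α ∈ [0,1], then P({ω : S(ω) ∪ A(ω) ≠ ∅ and |(S(ω) ∪ A(ω)) ∩ N| > q · |S(ω) ∪ A(ω)|}) ≤ α. -/
/-! When `S` selects no null index, all null indices of `S ∪ A` lie in `A`, whose share of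
`S ∪ A` is at most `q`; so the event of a false-positive proportion above `q` is contained in
the event `S ∩ N ≠ ∅`. -/

open MeasureTheory

namespace Finset

variable {ι : Type*} [DecidableEq ι]

theorem card_union_inter_le_of_inter_eq_empty_s2 {S A N : Finset ι} (hSN : S ∩ N = ∅) :
    ((S ∪ A) ∩ N).card ≤ A.card := by
  rw [union_inter_distrib_right, hSN, empty_union]
  exact card_le_card inter_subset_left

theorem card_union_inter_le_mul_of_inter_eq_empty {q : ℝ} {S A N : Finset ι}
    (hdisj : A ∩ S = ∅) (hprop : (A.card : ℝ) ≤ q * (A.card + S.card)) (hSN : S ∩ N = ∅) :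
    (((S ∪ A) ∩ N).card : ℝ) ≤ q * (S ∪ A).card := by
  have hunion : ((S ∪ A).card : ℝ) = A.card + S.card := by
    rw [card_union_of_disjoint (disjoint_iff_inter_eq_empty.mpr hdisj).symm]
    push_cast
    ring
  calc (((S ∪ A) ∩ N).card : ℝ) ≤ A.card := by
        exact_mod_cast card_union_inter_le_of_inter_eq_empty_s2 hSN
    _ ≤ q * (S ∪ A).card := hunion ▸ hprop

end Finset

theorem pfp_finite_sample_general
    {Ω : Type*} [MeasurableSpace Ω] (P : Measure Ω)
    (p : ℕ) (q : ℝ)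
    (N : Finset (Fin p)) (S A : Ω → Finset (Fin p))
    (hdisj : ∀ ω, A ω ∩ S ω = ∅)
    (hprop : ∀ ω, ((A ω).card : ℝ) ≤ q * (((A ω).card : ℝ) + ((S ω).card : ℝ)))
    (α : ℝ)
    (hfwer : P {ω | S ω ∩ N ≠ ∅} ≤ ENNReal.ofReal α) :
    P {ω | S ω ∪ A ω ≠ ∅ ∧
        q * (((S ω ∪ A ω).card : ℝ)) < (((S ω ∪ A ω) ∩ N).card : ℝ)} ≤
      ENNReal.ofReal α := by
  refine (measure_mono fun ω ⟨_, hexceeds⟩ hSN => ?_).trans hfwer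
  exact hexceeds.not_ge
    (Finset.card_union_inter_le_mul_of_inter_eq_empty (hdisj ω) (hprop ω) hSN)

/-- Finite-sample control of the proportion of false positives by the augmented
selection procedure: if the initial selection `S` makes a type I error with probability
at most `α`, and the augmentation set `A` is always disjoint from `S` with
`|A| ≤ q (|A| + |S|)`, then the probability that the proportion of null indices among
the selected indices `S ∪ A` exceeds `q` is at most `α`. -/
theorem pfp_finite_sample
    {Ω : Type*} [MeasurableSpace Ω] (P : Measure Ω) [IsProbabilityMeasure P]
    (p : ℕ) (q : ℝ) (hq : q ∈ Set.Ioo (0 : ℝ) 1)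
    (N : Finset (Fin p)) (S A : Ω → Finset (Fin p))
    (hS : @Measurable Ω (Finset (Fin p)) _ ⊤ S)
    (hA : @Measurable Ω (Finset (Fin p)) _ ⊤ A)
    (hdisj : ∀ ω, A ω ∩ S ω = ∅)
    (hprop : ∀ ω, ((A ω).card : ℝ) ≤ q * (((A ω).card : ℝ) + ((S ω).card : ℝ)))
    (α : ℝ) (hα : α ∈ Set.Icc (0 : ℝ) 1)
    (hfwer : P {ω | S ω ∩ N ≠ ∅} ≤ ENNReal.ofReal α) :
    P {ω | S ω ∪ A ω ≠ ∅ ∧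
        q * (((S ω ∪ A ω).card : ℝ)) < (((S ω ∪ A ω) ∩ N).card : ℝ)} ≤
      ENNReal.ofReal α :=
  pfp_finite_sample_general P p q N S A hdisj hprop α hfwer
end

section
/- Finite-sample bound on the false discovery rate of the augmented selection procedure: let (Ω, F, P) be a probability space, p a natural number, q ∈ (0,1), α ∈ [0,1], N ⊆ Fin p a fixed set (the null indices), and S, A : Ω → Finset (Fin p) measurable maps such that for every ω, A(ω) ∩ S(ω) = ∅ and |A(ω)| ≤ q · (|A(ω)| + |S(ω)|). Suppose P({ω : S(ω) ∩ N ≠ ∅}) ≤ α. Define the false discovery proportion FDP(ω) := |(S(ω) ∪ A(ω)) ∩ N| / |S(ω) ∪ A(ω)| when S(ω) ∪ A(ω) ≠ ∅ and FDP(ω) := 0 otherwise. Then the expectation satisfies E[FDP] ≤ q(1 − α) + α. -/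
/-!
Off the event `E` that the initial selection contains a null index, every false discovery
of `S ∪ A` lies in `A`, so the false discovery proportion is at most `|A| / (|A| + |S|) ≤ q`;
on `E` it is at most `1`. Hence `E[FDP] ≤ q + (1 - q) P(E) ≤ q + (1 - q) α`.
-/

open MeasureTheory

section DiscoveryProportion

variable {ι : Type*} [DecidableEq ι]

theorem card_inter_div_card_le_one (R N : Finset ι) : ((R ∩ N).card : ℝ) / R.card ≤ 1 :=
  div_le_one_of_le₀ (by exact_mod_cast Finset.card_le_card Finset.inter_subset_left)
    (Nat.cast_nonneg _)

theorem card_union_inter_div_card_le {S A N : Finset ι} {q : ℝ} (hq : 0 ≤ q)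
    (hAS : Disjoint A S) (hSN : Disjoint S N)
    (hprop : (A.card : ℝ) ≤ q * (A.card + S.card)) :
    (((S ∪ A) ∩ N).card : ℝ) / (S ∪ A).card ≤ q := by
  have hfalse : (S ∪ A) ∩ N ⊆ A := by
    rw [Finset.union_inter_distrib_right, Finset.disjoint_iff_inter_eq_empty.mp hSN,
      Finset.empty_union]
    exact Finset.inter_subset_left
  have hcard : ((S ∪ A).card : ℝ) = A.card + S.card := by
    rw [Finset.card_union_of_disjoint hAS.symm, Nat.cast_add, add_comm]
  refine div_le_of_le_mul₀ (Nat.cast_nonneg _) hq ?_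
  calc (((S ∪ A) ∩ N).card : ℝ) ≤ A.card := by exact_mod_cast Finset.card_le_card hfalse
    _ ≤ q * (S ∪ A).card := hcard ▸ hprop

end DiscoveryProportion

-- Neither `E` nor `f` need be measurable: `f` is dominated by a simple function on the
-- measurable hull of `E`, and `∫ f = 0` when `f` is not integrable.
theorem integral_le_add_mul_measureReal_of_le {Ω : Type*} [MeasurableSpace Ω]
    (P : Measure Ω) [IsProbabilityMeasure P] {f : Ω → ℝ} {E : Set Ω} {a b : ℝ}
    (hf : 0 ≤ f) (hfb : ∀ ω, f ω ≤ b) (hfa : ∀ ω ∉ E, f ω ≤ a) :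
    ∫ ω, f ω ∂P ≤ a + (b - a) * P.real E := by
  set T := toMeasurable P E
  have hT : MeasurableSet T := measurableSet_toMeasurable P E
  have hdom : ∀ ω, f ω ≤ a + T.indicator (fun _ => b - a) ω := by
    intro ω
    by_cases hωT : ω ∈ T
    · rw [Set.indicator_of_mem hωT]
      linarith [hfb ω]
    · rw [Set.indicator_of_notMem hωT, add_zero]
      exact hfa ω fun hωE => hωT (subset_toMeasurable P E hωE)
  have hint : Integrable (fun ω => a + T.indicator (fun _ => b - a) ω) P :=
    (integrable_const a).add ((integrable_const (b - a)).indicator hT)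
  calc ∫ ω, f ω ∂P ≤ ∫ ω, a + T.indicator (fun _ => b - a) ω ∂P :=
        integral_mono_of_nonneg (ae_of_all _ hf) hint (ae_of_all _ hdom)
    _ = a + (b - a) * P.real E := by
      rw [integral_add (integrable_const a) ((integrable_const (b - a)).indicator hT),
        integral_indicator_const _ hT, integral_const]
      simp [T, measureReal_def, mul_comm]

theorem fdr_finite_sample_general
    {Ω : Type*} [MeasurableSpace Ω] (P : Measure Ω) [IsProbabilityMeasure P]
    (p : ℕ) (q : ℝ) (hq : q ∈ Set.Ioo (0 : ℝ) 1)
    (α : ℝ) (hα : α ∈ Set.Icc (0 : ℝ) 1)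
    (N : Finset (Fin p)) (S A : Ω → Finset (Fin p))
    (hdisj : ∀ ω, A ω ∩ S ω = ∅)
    (hprop : ∀ ω, ((A ω).card : ℝ) ≤ q * (((A ω).card : ℝ) + ((S ω).card : ℝ)))
    (hfwer : P {ω | S ω ∩ N ≠ ∅} ≤ ENNReal.ofReal α)
    (FDP : Ω → ℝ)
    (hFDP : ∀ ω, FDP ω =
      if S ω ∪ A ω ≠ ∅ then (((S ω ∪ A ω) ∩ N).card : ℝ) / (((S ω ∪ A ω).card : ℝ))
      else 0) :
    ∫ ω, FDP ω ∂P ≤ q * (1 - α) + α := by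
  -- The case split in `hFDP` is redundant, since `x / 0 = 0`.
  obtain rfl : FDP = fun ω => (((S ω ∪ A ω) ∩ N).card : ℝ) / (S ω ∪ A ω).card := by
    funext ω
    rw [hFDP ω]
    split_ifs with h
    · rfl
    · simp [not_not.mp h]
  have hbound := integral_le_add_mul_measureReal_of_le P (E := {ω | S ω ∩ N ≠ ∅}) (b := 1)
    (fun _ => by positivity) (fun _ => card_inter_div_card_le_one _ _)
    (fun ω hω => card_union_inter_div_card_le hq.1.le
      (Finset.disjoint_iff_inter_eq_empty.2 (hdisj ω))
      (Finset.disjoint_iff_inter_eq_empty.2 (not_not.mp hω)) (hprop ω))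
  have hPE : P.real {ω | S ω ∩ N ≠ ∅} ≤ α := ENNReal.toReal_le_of_le_ofReal hα.1 hfwer
  calc _ ≤ q + (1 - q) * P.real {ω | S ω ∩ N ≠ ∅} := hbound
    _ ≤ q + (1 - q) * α := by gcongr; linarith [hq.2]
    _ = q * (1 - α) + α := by ring

/-- Finite-sample bound on the false discovery rate of the augmented selection
procedure: if the initial selection `S` makes a type I error with probability at most
`α`, and the augmentation set `A` is always disjoint from `S` with
`|A| ≤ q (|A| + |S|)`, then the expected false discovery proportion of the augmented
selection `S ∪ A` is at most `q (1 - α) + α`. -/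
theorem fdr_finite_sample
    {Ω : Type*} [MeasurableSpace Ω] (P : Measure Ω) [IsProbabilityMeasure P]
    (p : ℕ) (q : ℝ) (hq : q ∈ Set.Ioo (0 : ℝ) 1)
    (α : ℝ) (hα : α ∈ Set.Icc (0 : ℝ) 1)
    (N : Finset (Fin p)) (S A : Ω → Finset (Fin p))
    (hS : @Measurable Ω (Finset (Fin p)) _ ⊤ S)
    (hA : @Measurable Ω (Finset (Fin p)) _ ⊤ A)
    (hdisj : ∀ ω, A ω ∩ S ω = ∅)
    (hprop : ∀ ω, ((A ω).card : ℝ) ≤ q * (((A ω).card : ℝ) + ((S ω).card : ℝ)))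
    (hfwer : P {ω | S ω ∩ N ≠ ∅} ≤ ENNReal.ofReal α)
    (FDP : Ω → ℝ)
    (hFDP : ∀ ω, FDP ω =
      if S ω ∪ A ω ≠ ∅ then (((S ω ∪ A ω) ∩ N).card : ℝ) / (((S ω ∪ A ω).card : ℝ))
      else 0) :
    ∫ ω, FDP ω ∂P ≤ q * (1 - α) + α :=
  fdr_finite_sample_general P p q hq α hα N S A hdisj hprop hfwer FDP hFDP
end

section
/- Asymptotic control of the generalized familywise error rate by the augmented selection procedure: let (Ω, F, P) be a probability space, p, k natural numbers, α ∈ [0,1], N ⊆ Fin p a fixed set (the null indices), and for each n ∈ ℕ let S_n, A_n : Ω → Finset (Fin p) be measurable maps with |A_n(ω)| ≤ k for every ω. If limsup_{n→∞} P({ω : S_n(ω) ∩ N ≠ ∅}) ≤ α, then limsup_{n→∞} P({ω : |(S_n(ω) ∪ A_n(ω)) ∩ N| ≥ k + 1}) ≤ α. -/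
open MeasureTheory Filter

/- At most `k` of the null indices in the augmented selection can come from `A n`, so `k + 1` of
them force a null index into `S n`: the gFWER(k) event is contained in the FWER event of `S n`
for every `n`, and limsups are monotone. -/

namespace Finset

variable {α : Type*} [DecidableEq α]

theorem card_union_inter_le_card_inter_add_card (S A N : Finset α) :
    ((S ∪ A) ∩ N).card ≤ (S ∩ N).card + A.card :=
  calc ((S ∪ A) ∩ N).card = (S ∩ N ∪ A ∩ N).card := by rw [union_inter_distrib_right]
    _ ≤ (S ∩ N).card + (A ∩ N).card := card_union_le _ _
    _ ≤ (S ∩ N).card + A.card := Nat.add_le_add_left (card_le_card inter_subset_left) _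

theorem inter_ne_empty_of_card_union_inter {S A N : Finset α} {k : ℕ} (hA : A.card ≤ k)
    (h : k + 1 ≤ ((S ∪ A) ∩ N).card) : S ∩ N ≠ ∅ := by
  have := card_union_inter_le_card_inter_add_card S A N
  rw [← nonempty_iff_ne_empty, ← card_pos]
  omega

end Finset

theorem gfwer_asymptotic_general
    {Ω : Type*} [MeasurableSpace Ω] (P : Measure Ω)
    (p k : ℕ) (α : ℝ)
    (N : Finset (Fin p)) (S A : ℕ → Ω → Finset (Fin p))
    (hAk : ∀ n ω, (A n ω).card ≤ k)
    (hfwer : atTop.limsup (fun n => P {ω | S n ω ∩ N ≠ ∅}) ≤ ENNReal.ofReal α) :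
    atTop.limsup (fun n => P {ω | k + 1 ≤ ((S n ω ∪ A n ω) ∩ N).card}) ≤
      ENNReal.ofReal α := by
  refine le_trans (limsup_le_limsup (Eventually.of_forall fun n => ?_)) hfwer
  exact measure_mono fun ω => Finset.inter_ne_empty_of_card_union_inter (hAk n ω)

/-- Asymptotic control of the generalized familywise error rate by the augmented
selection procedure: if, for each sample size `n`, the initial selection `S n` makes a
type I error with probability asymptotically at most `α`, and each augmentation set
`A n` has at most `k` elements, then the probability that the augmented selection
`S n ∪ A n` contains at least `k + 1` null indices is asymptotically at most `α`. -/
theorem gfwer_asymptotic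
    {Ω : Type*} [MeasurableSpace Ω] (P : Measure Ω) [IsProbabilityMeasure P]
    (p k : ℕ) (α : ℝ) (hα : α ∈ Set.Icc (0 : ℝ) 1)
    (N : Finset (Fin p)) (S A : ℕ → Ω → Finset (Fin p))
    (hS : ∀ n, @Measurable Ω (Finset (Fin p)) _ ⊤ (S n))
    (hA : ∀ n, @Measurable Ω (Finset (Fin p)) _ ⊤ (A n))
    (hAk : ∀ n ω, (A n ω).card ≤ k)
    (hfwer : atTop.limsup (fun n => P {ω | S n ω ∩ N ≠ ∅}) ≤ ENNReal.ofReal α) :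
    atTop.limsup (fun n => P {ω | k + 1 ≤ ((S n ω ∪ A n ω) ∩ N).card}) ≤
      ENNReal.ofReal α :=
  gfwer_asymptotic_general P p k α N S A hAk hfwer
end

section
/- Asymptotic bound on the false discovery rate of the augmented selection procedure: let (Ω, F, P) be a probability space, p a natural number, q ∈ (0,1), α ∈ [0,1], N ⊆ Fin p a fixed set (the null indices), and for each n ∈ ℕ let S_n, A_n : Ω → Finset (Fin p) be measurable maps such that for every ω, A_n(ω) ∩ S_n(ω) = ∅ and |A_n(ω)| ≤ q · (|A_n(ω)| + |S_n(ω)|). Suppose limsup_{n→∞} P({ω : S_n(ω) ∩ N ≠ ∅}) ≤ α. Define FDP_n(ω) := |(S_n(ω) ∪ A_n(ω)) ∩ N| / |S_n(ω) ∪ A_n(ω)| when S_n(ω) ∪ A_n(ω) ≠ ∅ and FDP_n(ω) := 0 otherwise. Then limsup_{n→∞} E[FDP_n] ≤ q(1 − α) + α. -/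
/-!
On the event that the initial selection `S` contains no null index, every false discovery lies
in the augmentation `A`, so the proportion constraint bounds the false discovery proportion by
`q`; otherwise it is at most `1`. Hence `FDP ≤ q + (1 - q) 𝟙{S ∩ N ≠ ∅}`, so
`E[FDP] ≤ q + (1 - q) P(S ∩ N ≠ ∅)`, and passing to the limsup with the familywise error bound
gives `q + (1 - q) α = q (1 - α) + α`.
-/

open MeasureTheory Filter

section FalseDiscoveryProportion

variable {α : Type*} [DecidableEq α]

/-- Equal to `0` for empty `R`, since `x / 0 = 0`. -/
noncomputable def falseDiscoveryProportion (R N : Finset α) : ℝ := ((R ∩ N).card : ℝ) / R.card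

lemma falseDiscoveryProportion_nonneg (R N : Finset α) : 0 ≤ falseDiscoveryProportion R N := by
  unfold falseDiscoveryProportion
  positivity

lemma falseDiscoveryProportion_le_one (R N : Finset α) : falseDiscoveryProportion R N ≤ 1 :=
  div_le_one_of_le₀ (by exact_mod_cast Finset.card_le_card Finset.inter_subset_left)
    (Nat.cast_nonneg _)

lemma falseDiscoveryProportion_union_le {S A N : Finset α} {q : ℝ} (hq : 0 ≤ q)
    (hdisj : A ∩ S = ∅) (hprop : (A.card : ℝ) ≤ q * (A.card + S.card)) (hSN : S ∩ N = ∅) :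
    falseDiscoveryProportion (S ∪ A) N ≤ q := by
  have hnull : (S ∪ A) ∩ N ⊆ A := by
    rw [Finset.union_inter_distrib_right, hSN, Finset.empty_union]
    exact Finset.inter_subset_left
  have hcard : ((S ∪ A).card : ℝ) = A.card + S.card := by
    rw [Finset.card_union_of_disjoint (Finset.disjoint_iff_inter_eq_empty.2
      (by rwa [Finset.inter_comm])), Nat.cast_add, add_comm]
  rcases (Nat.cast_nonneg (α := ℝ) (S ∪ A).card).eq_or_lt with h0 | hpos
  · rw [falseDiscoveryProportion, ← h0, div_zero]
    exact hq
  rw [falseDiscoveryProportion, div_le_iff₀ hpos, hcard]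
  exact (Nat.cast_le.2 (Finset.card_le_card hnull)).trans hprop

end FalseDiscoveryProportion

section Probability

variable {Ω : Type*} [MeasurableSpace Ω] (P : Measure Ω) [IsProbabilityMeasure P]

/-- `f` is compared with `c + (1 - c)` times the indicator of a measurable hull of `E`. -/
lemma integral_le_add_mul_measureReal_of_le_off {f : Ω → ℝ} (E : Set Ω) {c : ℝ}
    (hf0 : ∀ ω, 0 ≤ f ω) (hf1 : ∀ ω, f ω ≤ 1) (hfc : ∀ ω ∉ E, f ω ≤ c) :
    ∫ ω, f ω ∂P ≤ c + (1 - c) * P.real E := by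
  set H := toMeasurable P E
  have hH : MeasurableSet H := measurableSet_toMeasurable P E
  have hbound : ∀ ω, f ω ≤ c + (1 - c) * H.indicator (fun _ => 1) ω := by
    intro ω
    by_cases hω : ω ∈ H
    · simpa [hω] using hf1 ω
    · simpa [hω] using hfc ω fun hE => hω (subset_toMeasurable P E hE)
  calc ∫ ω, f ω ∂P ≤ ∫ ω, c + (1 - c) * H.indicator (fun _ => 1) ω ∂P :=
        integral_mono_of_nonneg (ae_of_all _ hf0)
          ((integrable_const c).add (((integrable_const 1).indicator hH).const_mul _))
          (ae_of_all _ hbound)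
    _ = c + (1 - c) * P.real E := by
        rw [integral_add (integrable_const c) (((integrable_const 1).indicator hH).const_mul _),
          integral_const_mul, integral_indicator_const (1 : ℝ) hH, integral_const, probReal_univ,
          one_smul, measureReal_def, measure_toMeasurable, measureReal_def, smul_eq_mul, mul_one]

lemma limsup_measureReal_le {ι : Type*} {F : Filter ι} [F.NeBot] {E : ι → Set Ω} {a : ℝ}
    (ha : 0 ≤ a) (h : F.limsup (fun i => P (E i)) ≤ ENNReal.ofReal a) :
    F.limsup (fun i => P.real (E i)) ≤ a := by
  simp only [measureReal_def]
  rw [ENNReal.limsup_toReal_eq ENNReal.one_ne_top (Eventually.of_forall fun _ => prob_le_one)]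
  exact ENNReal.toReal_le_of_le_ofReal ha h

end Probability

lemma limsup_le_add_mul_of_le {ι : Type*} {F : Filter ι} [F.NeBot] {u v : ι → ℝ} {a b c : ℝ}
    (hb : 0 ≤ b) (hu : ∀ i, 0 ≤ u i) (hv0 : ∀ i, 0 ≤ v i) (hv1 : ∀ i, v i ≤ 1)
    (huv : ∀ i, u i ≤ a + b * v i) (hv : F.limsup v ≤ c) :
    F.limsup u ≤ a + b * c := by
  have hv_bdd : F.IsBoundedUnder (· ≤ ·) v := isBoundedUnder_of ⟨1, hv1⟩
  have hv_cobdd : F.IsCoboundedUnder (· ≤ ·) v := isCoboundedUnder_le_of_le F hv0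
  have haffine : Monotone fun x => a + b * x := fun _ _ hxy =>
    add_le_add_right (mul_le_mul_of_nonneg_left hxy hb) a
  calc F.limsup u ≤ F.limsup (fun i => a + b * v i) :=
        limsup_le_limsup (Eventually.of_forall huv) (isCoboundedUnder_le_of_le F hu)
          (haffine.isBoundedUnder_le_comp hv_bdd)
    _ = a + b * F.limsup v :=
        (haffine.map_limsup_of_continuousAt v (by fun_prop) hv_bdd hv_cobdd).symm
    _ ≤ a + b * c := by gcongr

theorem fdr_asymptotic_general
    {Ω : Type*} [MeasurableSpace Ω] (P : Measure Ω) [IsProbabilityMeasure P]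
    (p : ℕ) (q : ℝ) (hq : q ∈ Set.Ioo (0 : ℝ) 1)
    (α : ℝ) (hα : α ∈ Set.Icc (0 : ℝ) 1)
    (N : Finset (Fin p)) (S A : ℕ → Ω → Finset (Fin p))
    (hdisj : ∀ n ω, A n ω ∩ S n ω = ∅)
    (hprop : ∀ n ω, ((A n ω).card : ℝ) ≤ q * (((A n ω).card : ℝ) + ((S n ω).card : ℝ)))
    (hfwer : atTop.limsup (fun n => P {ω | S n ω ∩ N ≠ ∅}) ≤ ENNReal.ofReal α)
    (FDP : ℕ → Ω → ℝ)
    (hFDP : ∀ n ω, FDP n ω =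
      if S n ω ∪ A n ω ≠ ∅ then
        (((S n ω ∪ A n ω) ∩ N).card : ℝ) / (((S n ω ∪ A n ω).card : ℝ))
      else 0) :
    atTop.limsup (fun n => ∫ ω, FDP n ω ∂P) ≤ q * (1 - α) + α := by
  have hFDP_eq : ∀ n ω, FDP n ω = falseDiscoveryProportion (S n ω ∪ A n ω) N := by
    intro n ω
    rw [hFDP]
    split_ifs with h
    · rfl
    · simp [not_not.1 h, falseDiscoveryProportion]
  have hexpect : ∀ n, ∫ ω, FDP n ω ∂P ≤ q + (1 - q) * P.real {ω | S n ω ∩ N ≠ ∅} := fun n =>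
    integral_le_add_mul_measureReal_of_le_off P _
      (fun ω => hFDP_eq n ω ▸ falseDiscoveryProportion_nonneg _ _)
      (fun ω => hFDP_eq n ω ▸ falseDiscoveryProportion_le_one _ _)
      (fun ω hω => hFDP_eq n ω ▸
        falseDiscoveryProportion_union_le hq.1.le (hdisj n ω) (hprop n ω) (not_not.1 hω))
  calc atTop.limsup (fun n => ∫ ω, FDP n ω ∂P) ≤ q + (1 - q) * α :=
        limsup_le_add_mul_of_le (sub_nonneg.2 hq.2.le)
          (fun n => integral_nonneg fun ω => hFDP_eq n ω ▸ falseDiscoveryProportion_nonneg _ _)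
          (fun n => measureReal_nonneg) (fun n => measureReal_le_one) hexpect
          (limsup_measureReal_le P hα.1 hfwer)
    _ = q * (1 - α) + α := by ring

/-- Asymptotic bound on the false discovery rate of the augmented selection procedure:
if, for each sample size `n`, the initial selection `S n` makes a type I error with
probability asymptotically at most `α`, and each augmentation set `A n` is disjoint
from `S n` with `|A n| ≤ q (|A n| + |S n|)`, then the expected false discovery
proportion of the augmented selection `S n ∪ A n` is asymptotically at most
`q (1 - α) + α`. -/
theorem fdr_asymptotic
    {Ω : Type*} [MeasurableSpace Ω] (P : Measure Ω) [IsProbabilityMeasure P]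
    (p : ℕ) (q : ℝ) (hq : q ∈ Set.Ioo (0 : ℝ) 1)
    (α : ℝ) (hα : α ∈ Set.Icc (0 : ℝ) 1)
    (N : Finset (Fin p)) (S A : ℕ → Ω → Finset (Fin p))
    (hS : ∀ n, @Measurable Ω (Finset (Fin p)) _ ⊤ (S n))
    (hA : ∀ n, @Measurable Ω (Finset (Fin p)) _ ⊤ (A n))
    (hdisj : ∀ n ω, A n ω ∩ S n ω = ∅)
    (hprop : ∀ n ω, ((A n ω).card : ℝ) ≤ q * (((A n ω).card : ℝ) + ((S n ω).card : ℝ)))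
    (hfwer : atTop.limsup (fun n => P {ω | S n ω ∩ N ≠ ∅}) ≤ ENNReal.ofReal α)
    (FDP : ℕ → Ω → ℝ)
    (hFDP : ∀ n ω, FDP n ω =
      if S n ω ∪ A n ω ≠ ∅ then
        (((S n ω ∪ A n ω) ∩ N).card : ℝ) / (((S n ω ∪ A n ω).card : ℝ))
      else 0) :
    atTop.limsup (fun n => ∫ ω, FDP n ω ∂P) ≤ q * (1 - α) + α :=
  fdr_asymptotic_general P p q hq α hα N S A hdisj hprop hfwer FDP hFDP
end

section
/- Null variables do not change predictiveness: let p ≥ 1 be an integer and v : Finset (Fin p) → ℝ a monotone set function, and let T ⊆ Fin p be a finite set such that ψ_j(v) = 0 for every j ∈ T. Then v(s ∪ T) = v(s) for every subset s ⊆ Fin p. -/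
/-!
Every term of `spvim p v j` is a positive Shapley weight times the marginal gain
`v (insert j s) - v s`, which is nonnegative when `v` is monotone. A vanishing sum of
nonnegative terms forces each term to vanish, so adjoining a null index never changes `v`;
adjoining the null indices of `T` one at a time gives the theorem.
-/

/-- The Shapley population variable importance (SPVIM) of index `j` for the set
function `v`: the weighted sum, over all subsets `s` not containing `j`, of the
marginal gain in predictiveness from adding `j` to `s`. -/
noncomputable def spvim (p : ℕ) (v : Finset (Fin p) → ℝ) (j : Fin p) : ℝ :=
  ∑ s ∈ (Finset.univ.erase j).powerset,
    (1 / (p : ℝ)) * ((Nat.choose (p - 1) s.card : ℝ))⁻¹ * (v (insert j s) - v s)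

open Finset

theorem Finset.union_eq_of_forall_insert_eq {α β : Type*} [DecidableEq α]
    (v : Finset α → β) (T : Finset α) (hT : ∀ j ∈ T, ∀ s, v (insert j s) = v s) (s : Finset α) :
    v (s ∪ T) = v s := by
  induction T using Finset.induction_on with
  | empty => rw [union_empty]
  | insert j T _ ih =>
    rw [union_insert, hT j (mem_insert_self j T),
      ih fun k hk => hT k (mem_insert_of_mem hk)]

theorem spvim_weight_pos {p : ℕ} (j : Fin p) {s : Finset (Fin p)}
    (hs : s ∈ (univ.erase j).powerset) :
    0 < (1 / (p : ℝ)) * ((Nat.choose (p - 1) s.card : ℝ))⁻¹ := by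
  have hcard : s.card ≤ p - 1 := by
    simpa [card_erase_of_mem] using card_le_card (mem_powerset.mp hs)
  have hp : (0 : ℝ) < p := by exact_mod_cast j.pos
  have hchoose : (0 : ℝ) < Nat.choose (p - 1) s.card := by
    exact_mod_cast Nat.choose_pos hcard
  positivity

theorem insert_eq_of_spvim_eq_zero {p : ℕ} {v : Finset (Fin p) → ℝ} (hv : Monotone v)
    {j : Fin p} (hj : spvim p v j = 0) (s : Finset (Fin p)) :
    v (insert j s) = v s := by
  by_cases hjs : j ∈ s
  · rw [insert_eq_of_mem hjs]
  have hs : s ∈ (univ.erase j).powerset :=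
    mem_powerset.mpr fun x hx => mem_erase.mpr ⟨ne_of_mem_of_not_mem hx hjs, mem_univ x⟩
  have hterm_nonneg : ∀ t ∈ (univ.erase j).powerset,
      0 ≤ (1 / (p : ℝ)) * ((Nat.choose (p - 1) t.card : ℝ))⁻¹ * (v (insert j t) - v t) :=
    fun t ht => mul_nonneg (spvim_weight_pos j ht).le
      (sub_nonneg.mpr (hv (subset_insert j t)))
  have hterm_zero := (sum_eq_zero_iff_of_nonneg hterm_nonneg).mp hj s hs
  rw [mul_eq_zero, or_iff_right (spvim_weight_pos j hs).ne', sub_eq_zero] at hterm_zero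
  exact hterm_zero

theorem union_null_set_eq_general (p : ℕ) (v : Finset (Fin p) → ℝ)
    (hv : Monotone v) (T : Finset (Fin p)) (hT : ∀ j ∈ T, spvim p v j = 0) :
    ∀ s : Finset (Fin p), v (s ∪ T) = v s :=
  union_eq_of_forall_insert_eq v T fun j hj => insert_eq_of_spvim_eq_zero hv (hT j hj)

/-- Null variables do not change predictiveness: if every index of `T` has zero
Shapley population variable importance for the monotone set function `v`, then
adjoining `T` to any subset `s` leaves `v` unchanged. -/
theorem union_null_set_eq (p : ℕ) (hp : 1 ≤ p) (v : Finset (Fin p) → ℝ)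
    (hv : Monotone v) (T : Finset (Fin p)) (hT : ∀ j ∈ T, spvim p v j = 0) :
    ∀ s : Finset (Fin p), v (s ∪ T) = v s :=
  union_null_set_eq_general p v hv T hT
end

section
/- Persistence of a consistent variable selection procedure (abstract core of Lemma 2): let p ≥ 1 be an integer, v : Finset (Fin p) → ℝ a monotone set function, and S₀ ⊆ Fin p a set such that ψ_j(v) = 0 for every j ∉ S₀. Let (Ω, F, P) be a probability space, and for each n ∈ ℕ let S_n : Ω → Finset (Fin p) be measurable with P({ω : S₀ ⊆ S_n(ω)}) → 1 as n → ∞, and let V_n : Ω → ℝ be measurable random variables such that V_n − v(S_n(·)) → 0 in probability (i.e., for every ε > 0, P(|V_n(ω) − v(S_n(ω))| > ε) → 0). Then V_n → v(Finset.univ) in probability: for every ε > 0, P({ω : |V_n(ω) − v(Finset.univ)| > ε}) → 0 as n → ∞. -/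
/-!
For monotone `v` the SPVIM of `j` is a positively weighted sum of nonnegative marginal gains, so
it vanishes only if adding `j` never changes `v`. Adding the indices outside `S₀` one at a time
then shows `v t = v univ` whenever `S₀ ⊆ t`. Hence `|V n - v univ| > ε` forces either
`S₀ ⊄ S n` or `|V n - v (S n)| > ε`, and both events have vanishing probability.
-/

open MeasureTheory Filter

theorem spvim_eq_zero_iff {p : ℕ} {v : Finset (Fin p) → ℝ} (hv : Monotone v) (j : Fin p) :
    spvim p v j = 0 ↔ ∀ s, v (insert j s) = v s := by
  have hweight : ∀ s ∈ (Finset.univ.erase j).powerset,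
      0 < (1 / (p : ℝ)) * ((Nat.choose (p - 1) s.card : ℝ))⁻¹ := by
    intro s hs
    have hcard : s.card ≤ p - 1 := by
      simpa [Finset.card_erase_of_mem] using Finset.card_le_card (Finset.mem_powerset.1 hs)
    have hp : (0 : ℝ) < p := by exact_mod_cast j.pos
    have hchoose : (0 : ℝ) < Nat.choose (p - 1) s.card := by exact_mod_cast Nat.choose_pos hcard
    positivity
  have hgain : ∀ s, 0 ≤ v (insert j s) - v s := fun s =>
    sub_nonneg.2 (hv (Finset.subset_insert _ _))
  constructor
  · intro h s
    by_cases hjs : j ∈ s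
    · rw [Finset.insert_eq_of_mem hjs]
    have hs : s ∈ (Finset.univ.erase j).powerset := by simp [Finset.subset_erase, hjs]
    have hterm := (Finset.sum_eq_zero_iff_of_nonneg fun t ht =>
      mul_nonneg (hweight t ht).le (hgain t)).1 h s hs
    exact sub_eq_zero.1 ((mul_eq_zero.1 hterm).resolve_left (hweight s hs).ne')
  · intro h
    exact Finset.sum_eq_zero fun s _ => by rw [h s, sub_self, mul_zero]

theorem apply_eq_apply_univ_of_subset {α β : Type*} [Fintype α] [DecidableEq α]
    {v : Finset α → β} {S₀ : Finset α} (hv : ∀ j ∉ S₀, ∀ s, v (insert j s) = v s)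
    {t : Finset α} (ht : S₀ ⊆ t) : v t = v Finset.univ := by
  have hunion : ∀ r : Finset α, Disjoint r S₀ → v (t ∪ r) = v t := by
    intro r
    induction r using Finset.induction_on with
    | empty => simp
    | insert j r _ ih =>
      intro hr
      rw [Finset.disjoint_insert_left] at hr
      rw [Finset.union_insert, hv j hr.1, ih hr.2]
  rw [← hunion _ (Finset.disjoint_of_subset_right ht Finset.sdiff_disjoint),
    Finset.union_sdiff_of_subset (Finset.subset_univ t)]

theorem tendsto_measure_compl_of_tendsto_one {Ω ι : Type*} [MeasurableSpace Ω] {μ : Measure Ω}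
    [IsProbabilityMeasure μ] {l : Filter ι} {A : ι → Set Ω} (hA : ∀ i, MeasurableSet (A i))
    (h : Tendsto (fun i => μ (A i)) l (nhds 1)) : Tendsto (fun i => μ (A i)ᶜ) l (nhds 0) := by
  simp_rw [prob_compl_eq_one_sub (hA _)]
  simpa using ENNReal.Tendsto.sub tendsto_const_nhds h (Or.inl ENNReal.one_ne_top)

theorem persistence_general
    (p : ℕ) (v : Finset (Fin p) → ℝ) (hv : Monotone v)
    (S₀ : Finset (Fin p)) (hS₀ : ∀ j ∉ S₀, spvim p v j = 0)
    {Ω : Type*} [MeasurableSpace Ω] (P : Measure Ω) [IsProbabilityMeasure P]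
    (S : ℕ → Ω → Finset (Fin p))
    (hSmeas : ∀ n, @Measurable Ω (Finset (Fin p)) _ ⊤ (S n))
    (hScons : Tendsto (fun n => P {ω | S₀ ⊆ S n ω}) atTop (nhds 1))
    (V : ℕ → Ω → ℝ)
    (hVcons : ∀ ε > (0 : ℝ),
      Tendsto (fun n => P {ω | ε < |V n ω - v (S n ω)|}) atTop (nhds 0)) :
    ∀ ε > (0 : ℝ),
      Tendsto (fun n => P {ω | ε < |V n ω - v Finset.univ|}) atTop (nhds 0) := by
  intro ε hε
  have hmissed : Tendsto (fun n => P {ω | S₀ ⊆ S n ω}ᶜ) atTop (nhds 0) :=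
    tendsto_measure_compl_of_tendsto_one (fun n => hSmeas n (t := {t | S₀ ⊆ t}) trivial) hScons
  have hsub : ∀ n, {ω | ε < |V n ω - v Finset.univ|} ⊆
      {ω | S₀ ⊆ S n ω}ᶜ ∪ {ω | ε < |V n ω - v (S n ω)|} := by
    intro n ω hω
    by_cases hsel : S₀ ⊆ S n ω
    · right
      rwa [Set.mem_ofPred_eq, apply_eq_apply_univ_of_subset
        (fun j hj => (spvim_eq_zero_iff hv j).1 (hS₀ j hj)) hsel]
    · exact Or.inl hsel
  refine tendsto_of_tendsto_of_tendsto_of_le_of_le tendsto_const_nhds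
    (by simpa using hmissed.add (hVcons ε hε)) (fun _ => zero_le)
    (fun n => (measure_mono (hsub n)).trans (measure_union_le _ _))

/-- Persistence of a consistent variable selection procedure (abstract core of
Lemma 2): if every index outside `S₀` has zero SPVIM for the monotone predictiveness
`v`, the selected sets `S n` contain `S₀` with probability tending to one, and the
achieved predictiveness `V n` matches `v (S n ·)` in probability, then `V n` converges
in probability to the optimal predictiveness `v univ`. -/
theorem persistence
    (p : ℕ) (hp : 1 ≤ p) (v : Finset (Fin p) → ℝ) (hv : Monotone v)
    (S₀ : Finset (Fin p)) (hS₀ : ∀ j ∉ S₀, spvim p v j = 0)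
    {Ω : Type*} [MeasurableSpace Ω] (P : Measure Ω) [IsProbabilityMeasure P]
    (S : ℕ → Ω → Finset (Fin p))
    (hSmeas : ∀ n, @Measurable Ω (Finset (Fin p)) _ ⊤ (S n))
    (hScons : Tendsto (fun n => P {ω | S₀ ⊆ S n ω}) atTop (nhds 1))
    (V : ℕ → Ω → ℝ) (hVmeas : ∀ n, Measurable (V n))
    (hVcons : ∀ ε > (0 : ℝ),
      Tendsto (fun n => P {ω | ε < |V n ω - v (S n ω)|}) atTop (nhds 0)) :
    ∀ ε > (0 : ℝ),
      Tendsto (fun n => P {ω | ε < |V n ω - v Finset.univ|}) atTop (nhds 0) :=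
  persistence_general p v hv S₀ hS₀ P S hSmeas hScons V hVcons
end

section
/- Deterministic key lemma for the Holm procedure: let m ≥ 1 be an integer, α ∈ (0,1), x : Fin m → [0,1] a vector of p-values, and N ⊆ Fin m a nonempty set. If the Holm procedure at level α rejects some index i ∈ N, then min_{i ∈ N} x_i < α / |N|. -/
/-- The Holm-adjusted p-value of index `i`: with `σ = Tuple.sort x` a rank-ordering of
the p-values `x` (so that `x ∘ σ` is nondecreasing) and `j = σ⁻¹ i` the rank of `i`,
the adjusted p-value is `max_{ℓ ≤ j} min ((m - ℓ) * x (σ ℓ)) 1` (with ranks `ℓ`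
zero-based, so that `m - ℓ` is the paper's `m - ℓ + 1` for one-based ranks). -/
noncomputable def holmAdjusted {m : ℕ} (x : Fin m → ℝ) (i : Fin m) : ℝ :=
  Finset.sup' (Finset.Iic ((Tuple.sort x).symm i)) Finset.nonempty_Iic
    (fun ℓ => min (((m - (ℓ : ℕ) : ℕ) : ℝ) * x (Tuple.sort x ℓ)) 1)

/-- The Holm procedure at level `α` rejects index `i` iff its Holm-adjusted p-value is
below `α`. -/
def holmReject {m : ℕ} (x : Fin m → ℝ) (α : ℝ) (i : Fin m) : Prop :=
  holmAdjusted x i < α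

/-!
Let `j` be the element of `N` of smallest rank `r` (zero-based). All `|N|` elements of `N` have
rank at least `r`, so `|N| ≤ m - r`. If some `i ∈ N` is rejected, then, since the adjusted
p-values are running maxima along the ranking and `r` is at most the rank of `i`,
`min ((m - r) x_j) 1 < α < 1`, whence `x_j < α / (m - r) ≤ α / |N|`.
-/

theorem Finset.card_le_sub_of_forall_le {α : Type*} {m : ℕ} (e : α ≃ Fin m) {N : Finset α}
    {k : Fin m} (h : ∀ i ∈ N, k ≤ e i) : N.card ≤ m - k := by
  rw [← Fin.card_Ici, ← N.card_map e.toEmbedding]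
  refine Finset.card_le_card fun r hr => ?_
  obtain ⟨i, hi, rfl⟩ := Finset.mem_map.mp hr
  exact Finset.mem_Ici.mpr (h i hi)

theorem holmReject.mul_lt {m : ℕ} {x : Fin m → ℝ} {α : ℝ} (hα : α ≤ 1) {i j : Fin m}
    (h : holmReject x α i) (hji : (Tuple.sort x).symm j ≤ (Tuple.sort x).symm i) :
    ((m - ((Tuple.sort x).symm j : ℕ) : ℕ) : ℝ) * x j < α := by
  have hterm := (Finset.le_sup' (fun ℓ : Fin m => min (((m - (ℓ : ℕ) : ℕ) : ℝ) *
    x (Tuple.sort x ℓ)) 1) (Finset.mem_Iic.mpr hji)).trans_lt h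
  simp only [Equiv.apply_symm_apply] at hterm
  exact (min_lt_iff.mp hterm).resolve_right hα.not_gt

theorem holm_key_lemma_general (m : ℕ) (α : ℝ) (hα : α ∈ Set.Ioo (0 : ℝ) 1)
    (x : Fin m → ℝ)
    (N : Finset (Fin m)) (hN : N.Nonempty)
    (h : ∃ i ∈ N, holmReject x α i) :
    N.inf' hN x < α / (N.card : ℝ) := by
  obtain ⟨i, hiN, hrej⟩ := h
  set σ := Tuple.sort x
  obtain ⟨j, hjN, hj_min⟩ := N.exists_min_image σ.symm hN
  have hmul := hrej.mul_lt hα.2.le (hj_min i hiN)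
  have hcard : N.card ≤ m - (σ.symm j : ℕ) := N.card_le_sub_of_forall_le σ.symm hj_min
  have hNpos : (0 : ℝ) < N.card := by exact_mod_cast hN.card_pos
  have hcard' : (N.card : ℝ) ≤ ((m - (σ.symm j : ℕ) : ℕ) : ℝ) := by exact_mod_cast hcard
  calc N.inf' hN x ≤ x j := N.inf'_le x hjN
    _ < α / ((m - (σ.symm j : ℕ) : ℕ) : ℝ) := by
      rw [lt_div_iff₀ (hNpos.trans_le hcard')]; linarith
    _ ≤ α / (N.card : ℝ) := div_le_div_of_nonneg_left hα.1.le hNpos hcard'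

/-- Deterministic key lemma for the Holm procedure: if the Holm procedure at level
`α ∈ (0,1)` rejects some index of the nonempty set `N`, then the smallest p-value over
`N` is below `α / |N|`. -/
theorem holm_key_lemma (m : ℕ) (hm : 1 ≤ m) (α : ℝ) (hα : α ∈ Set.Ioo (0 : ℝ) 1)
    (x : Fin m → ℝ) (hx : ∀ i, x i ∈ Set.Icc (0 : ℝ) 1)
    (N : Finset (Fin m)) (hN : N.Nonempty)
    (h : ∃ i ∈ N, holmReject x α i) :
    N.inf' hN x < α / (N.card : ℝ) :=
  holm_key_lemma_general m α hα x N hN h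
end

section
/- Familywise error rate control of the Holm procedure (supplementary Lemma S1(a)): let m ≥ 1 be an integer, α ∈ (0,1), (Ω, F, P) a probability space, N ⊆ Fin m a set of null indices, and x : Ω → (Fin m → [0,1]) measurable p-values that are superuniform on the nulls, i.e., for every i ∈ N and every u ∈ [0,1], P({ω : x_i(ω) ≤ u}) ≤ u. Then the probability that the Holm procedure at level α rejects at least one index in N is at most α: P({ω : ∃ i ∈ N, the Holm procedure at level α applied to x(ω) rejects i}) ≤ α. -/
/-!
Let `k` be the null index of smallest rank `j` (zero-based). All `|N|` null indices have rank
at least `j`, so `|N| ≤ m - j`; and since the Holm-adjusted p-value of a rejected null index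
dominates the step-`j` term `min ((m - j) * x k) 1`, a null rejection forces `|N| * x k < α`.
Holm's rejections of nulls are thus contained in Bonferroni's, whose probability is at most
`α` by the union bound over `N`.
-/

open MeasureTheory

open Finset

lemma min_le_holmAdjusted {m : ℕ} (x : Fin m → ℝ) {i ℓ : Fin m}
    (hℓ : ℓ ≤ (Tuple.sort x).symm i) :
    min (((m - (ℓ : ℕ) : ℕ) : ℝ) * x (Tuple.sort x ℓ)) 1 ≤ holmAdjusted x i :=
  le_sup' (fun ℓ : Fin m => min (((m - (ℓ : ℕ) : ℕ) : ℝ) * x (Tuple.sort x ℓ)) 1)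
    (mem_Iic.2 hℓ)

lemma exists_card_mul_lt_of_holmReject {m : ℕ} {x : Fin m → ℝ} (hx0 : ∀ i, 0 ≤ x i)
    {α : ℝ} (hα1 : α ≤ 1) {N : Finset (Fin m)} {i : Fin m} (hi : i ∈ N)
    (hrej : holmReject x α i) : ∃ k ∈ N, (#N : ℝ) * x k < α := by
  set σ := Tuple.sort x
  obtain ⟨k, hkN, hmin⟩ := N.exists_min_image σ.symm ⟨i, hi⟩
  have hcard : #N ≤ m - σ.symm k :=
    calc #N = #(N.map σ.symm.toEmbedding) := (card_map _).symm
      _ ≤ #(Ici (σ.symm k)) := card_le_card fun l hl => by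
          obtain ⟨k', hk', rfl⟩ := mem_map.1 hl
          exact mem_Ici.2 (hmin k' hk')
      _ = m - σ.symm k := Fin.card_Ici _
  have hterm : min (((m - σ.symm k : ℕ) : ℝ) * x k) 1 < α := by
    simpa only [σ, Equiv.apply_symm_apply] using
      (min_le_holmAdjusted x (hmin i hi)).trans_lt hrej
  refine ⟨k, hkN, ?_⟩
  calc (#N : ℝ) * x k ≤ ((m - σ.symm k : ℕ) : ℝ) * x k := by gcongr; exact hx0 k
    _ < α := (min_lt_iff.1 hterm).resolve_right hα1.not_gt

lemma measure_exists_card_mul_le_le {Ω ι : Type*} [MeasurableSpace Ω] (μ : Measure Ω)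
    (N : Finset ι) (p : Ω → ι → ℝ) {α : ℝ} (hα0 : 0 ≤ α) (hα1 : α ≤ 1)
    (hsuper : ∀ i ∈ N, ∀ u ∈ Set.Icc (0 : ℝ) 1,
      μ {ω | p ω i ≤ u} ≤ ENNReal.ofReal u) :
    μ {ω | ∃ i ∈ N, (#N : ℝ) * p ω i ≤ α} ≤ ENNReal.ofReal α := by
  rcases N.eq_empty_or_nonempty with rfl | hN
  · simp
  have hcard : (0 : ℝ) < #N := by exact_mod_cast hN.card_pos
  have hu : α / #N ∈ Set.Icc (0 : ℝ) 1 :=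
    ⟨by positivity, (div_le_self hα0 (by exact_mod_cast hN.card_pos)).trans hα1⟩
  have hsub :
      {ω | ∃ i ∈ N, (#N : ℝ) * p ω i ≤ α} ⊆ ⋃ i ∈ N, {ω | p ω i ≤ α / #N} := by
    rintro ω ⟨i, hi, hle⟩
    exact Set.mem_biUnion hi ((le_div_iff₀' hcard).2 hle)
  calc μ {ω | ∃ i ∈ N, (#N : ℝ) * p ω i ≤ α}
      ≤ ∑ i ∈ N, μ {ω | p ω i ≤ α / #N} :=
        (measure_mono hsub).trans (measure_biUnion_finset_le _ _)
    _ ≤ ∑ _i ∈ N, ENNReal.ofReal (α / #N) := sum_le_sum fun i hi => hsuper i hi _ hu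
    _ = ENNReal.ofReal α := by
        rw [sum_const, nsmul_eq_mul, ← ENNReal.ofReal_natCast, ← ENNReal.ofReal_mul hcard.le,
          mul_div_cancel₀ _ hcard.ne']

theorem holm_fwer_control_general (m : ℕ) (α : ℝ) (hα : α ∈ Set.Ioo (0 : ℝ) 1)
    {Ω : Type*} [MeasurableSpace Ω] (P : Measure Ω)
    (N : Finset (Fin m))
    (x : Ω → Fin m → ℝ)
    (hx01 : ∀ ω i, x ω i ∈ Set.Icc (0 : ℝ) 1)
    (hsuper : ∀ i ∈ N, ∀ u ∈ Set.Icc (0 : ℝ) 1,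
      P {ω | x ω i ≤ u} ≤ ENNReal.ofReal u) :
    P {ω | ∃ i ∈ N, holmReject (x ω) α i} ≤ ENNReal.ofReal α := by
  refine (measure_mono ?_).trans (measure_exists_card_mul_le_le P N x hα.1.le hα.2.le hsuper)
  rintro ω ⟨i, hi, hrej⟩
  obtain ⟨k, hk, hlt⟩ :=
    exists_card_mul_lt_of_holmReject (fun j => (hx01 ω j).1) hα.2.le hi hrej
  exact ⟨k, hk, hlt.le⟩

/-- Familywise error rate control of the Holm procedure: if the p-values are
superuniform on the null indices `N`, then the probability that the Holm procedure at
level `α ∈ (0,1)` rejects at least one index of `N` is at most `α`. -/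
theorem holm_fwer_control (m : ℕ) (hm : 1 ≤ m) (α : ℝ) (hα : α ∈ Set.Ioo (0 : ℝ) 1)
    {Ω : Type*} [MeasurableSpace Ω] (P : Measure Ω) [IsProbabilityMeasure P]
    (N : Finset (Fin m))
    (x : Ω → Fin m → ℝ) (hxmeas : Measurable x)
    (hx01 : ∀ ω i, x ω i ∈ Set.Icc (0 : ℝ) 1)
    (hsuper : ∀ i ∈ N, ∀ u ∈ Set.Icc (0 : ℝ) 1,
      P {ω | x ω i ≤ u} ≤ ENNReal.ofReal u) :
    P {ω | ∃ i ∈ N, holmReject (x ω) α i} ≤ ENNReal.ofReal α :=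
  holm_fwer_control_general m α hα P N x hx01 hsuper
end

section
/- Finite-sample gFWER(k) control of Holm-based intrinsic selection followed by augmentation (Theorem 1 instantiated with the Holm procedure): let m ≥ 1 be an integer, α ∈ (0,1), k ∈ ℕ, (Ω, F, P) a probability space, N ⊆ Fin m a set of null indices, and x : Ω → (Fin m → [0,1]) measurable p-values that are superuniform on the nulls, i.e., for every i ∈ N and every u ∈ [0,1], P({ω : x_i(ω) ≤ u}) ≤ u. Let S(ω) ⊆ Fin m be the set rejected by the Holm procedure at level α applied to x(ω), and let A : Ω → Finset (Fin m) be any measurable map with |A(ω)| ≤ k for every ω. Then P({ω : |(S(ω) ∪ A(ω)) ∩ N| ≥ k + 1}) ≤ α. -/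
/-!
The augmentation set `A` contributes at most `k` null indices, so more than `k` false
selections force the Holm procedure itself to reject a null. If it does, the first null in
the rank order has at most `m - #N` predecessors, so its Holm multiplier is at least `#N`
and its p-value is below `α / #N`. A union bound over the nulls then gives probability
at most `#N * (α / #N) = α`.
-/

open MeasureTheory

/-- The set of indices rejected by the Holm procedure at level `α`. -/
noncomputable def holmRejectSet {m : ℕ} (x : Fin m → ℝ) (α : ℝ) : Finset (Fin m) :=
  Finset.univ.filter (fun i => holmAdjusted x i < α)

open Finset

lemma Finset.nonempty_inter_of_lt_card_union_inter {ι : Type*} [DecidableEq ι] {S A N : Finset ι}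
    {k : ℕ} (hA : #A ≤ k) (h : k < #((S ∪ A) ∩ N)) : (S ∩ N).Nonempty := by
  have hsplit : #((S ∪ A) ∩ N) ≤ #(S ∩ N) + #A := by
    rw [union_inter_distrib_right]
    exact (card_union_le _ _).trans (by gcongr; exact inter_subset_left)
  rw [← card_pos]
  omega

lemma Fin.card_add_le_of_forall_lt_notMem {m : ℕ} {σ : Fin m → Fin m} (hσ : σ.Injective)
    {N : Finset (Fin m)} {r : Fin m} (h : ∀ ℓ < r, σ ℓ ∉ N) : #N + r ≤ m := by
  have hdisj : Disjoint N ((Iio r).map ⟨σ, hσ⟩) := by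
    rw [disjoint_right]
    simp only [mem_map, mem_Iio, Function.Embedding.coeFn_mk]
    rintro _ ⟨ℓ, hℓ, rfl⟩
    exact h ℓ hℓ
  simpa [card_union_of_disjoint hdisj] using card_le_univ (N ∪ (Iio r).map ⟨σ, hσ⟩)

lemma exists_lt_div_card_of_holmReject {m : ℕ} {v : Fin m → ℝ} (hv : ∀ i, 0 ≤ v i) {α : ℝ}
    (hα : α ≤ 1) {N : Finset (Fin m)} {i : Fin m} (hi : i ∈ N) (hrej : holmReject v α i) :
    ∃ j ∈ N, v j < α / #N := by
  set σ := Tuple.sort v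
  set nullRanks := univ.filter (fun ℓ => σ ℓ ∈ N)
  have hiRank : σ.symm i ∈ nullRanks := by simpa [nullRanks] using hi
  set r := nullRanks.min' ⟨_, hiRank⟩
  have hrNull : σ r ∈ N := (mem_filter.mp (nullRanks.min'_mem _)).2
  have hbefore : ∀ ℓ < r, σ ℓ ∉ N := fun ℓ hℓ hℓN =>
    (nullRanks.min'_le ℓ (mem_filter.mpr ⟨mem_univ _, hℓN⟩)).not_gt hℓ
  have hcard : #N + r ≤ m := Fin.card_add_le_of_forall_lt_notMem σ.injective hbefore
  have hmin : min (((m - (r : ℕ) : ℕ) : ℝ) * v (σ r)) 1 < α :=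
    (sup'_lt_iff _).mp hrej r (mem_Iic.mpr (nullRanks.min'_le _ hiRank))
  have hlt : ((m - (r : ℕ) : ℕ) : ℝ) * v (σ r) < α := by
    rcases min_lt_iff.mp hmin with h | h
    · exact h
    · linarith
  have hNpos : (0 : ℝ) < #N := by exact_mod_cast card_pos.mpr ⟨_, hi⟩
  refine ⟨σ r, hrNull, (lt_div_iff₀' hNpos).mpr (lt_of_le_of_lt ?_ hlt)⟩
  gcongr
  · exact hv _
  · omega

section

variable {Ω ι : Type*} [MeasurableSpace Ω] (P : Measure Ω)

lemma measure_lt_card_union_inter_le [DecidableEq ι] (S A : Ω → Finset ι) (N : Finset ι)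
    {k : ℕ} (hAk : ∀ ω, #(A ω) ≤ k) :
    P {ω | k < #((S ω ∪ A ω) ∩ N)} ≤ P {ω | (S ω ∩ N).Nonempty} :=
  measure_mono fun ω hω => nonempty_inter_of_lt_card_union_inter (hAk ω) hω

lemma measure_exists_le_div_card_le {N : Finset ι} {X : Ω → ι → ℝ}
    (hsuper : ∀ i ∈ N, ∀ u ∈ Set.Icc (0 : ℝ) 1, P {ω | X ω i ≤ u} ≤ ENNReal.ofReal u)
    {α : ℝ} (hα0 : 0 ≤ α) (hα1 : α ≤ 1) :
    P {ω | ∃ i ∈ N, X ω i ≤ α / #N} ≤ ENNReal.ofReal α := by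
  rcases N.eq_empty_or_nonempty with rfl | hN
  · simp
  have hNpos : (0 : ℝ) < #N := by exact_mod_cast hN.card_pos
  have hu : α / #N ∈ Set.Icc (0 : ℝ) 1 :=
    ⟨by positivity, (div_le_self hα0 (by exact_mod_cast hN.card_pos)).trans hα1⟩
  calc P {ω | ∃ i ∈ N, X ω i ≤ α / #N}
      = P (⋃ i ∈ N, {ω | X ω i ≤ α / #N}) := by congr 1; ext; simp
    _ ≤ ∑ i ∈ N, P {ω | X ω i ≤ α / #N} := measure_biUnion_finset_le _ _
    _ ≤ ∑ _i ∈ N, ENNReal.ofReal (α / #N) := sum_le_sum fun i hi => hsuper i hi _ hu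
    _ = ENNReal.ofReal α := by
      rw [sum_const, nsmul_eq_mul, ← ENNReal.ofReal_natCast, ← ENNReal.ofReal_mul hNpos.le,
        mul_div_cancel₀ _ hNpos.ne']

end

theorem holm_augmented_gfwer_general (m : ℕ) (α : ℝ) (hα : α ∈ Set.Ioo (0 : ℝ) 1)
    (k : ℕ)
    {Ω : Type*} [MeasurableSpace Ω] (P : Measure Ω)
    (N : Finset (Fin m))
    (x : Ω → Fin m → ℝ)
    (hx01 : ∀ ω i, x ω i ∈ Set.Icc (0 : ℝ) 1)
    (hsuper : ∀ i ∈ N, ∀ u ∈ Set.Icc (0 : ℝ) 1,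
      P {ω | x ω i ≤ u} ≤ ENNReal.ofReal u)
    (A : Ω → Finset (Fin m))
    (hAk : ∀ ω, (A ω).card ≤ k) :
    P {ω | k + 1 ≤ ((holmRejectSet (x ω) α ∪ A ω) ∩ N).card} ≤ ENNReal.ofReal α :=
  calc P {ω | k + 1 ≤ ((holmRejectSet (x ω) α ∪ A ω) ∩ N).card}
      ≤ P {ω | (holmRejectSet (x ω) α ∩ N).Nonempty} :=
        measure_lt_card_union_inter_le P _ A N hAk
    _ ≤ P {ω | ∃ j ∈ N, x ω j ≤ α / #N} := measure_mono fun ω ⟨i, hi⟩ => by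
        obtain ⟨hiS, hiN⟩ := mem_inter.mp hi
        obtain ⟨j, hjN, hj⟩ := exists_lt_div_card_of_holmReject (fun i => (hx01 ω i).1)
          hα.2.le hiN (mem_filter.mp hiS).2
        exact ⟨j, hjN, hj.le⟩
    _ ≤ ENNReal.ofReal α := measure_exists_le_div_card_le P hsuper hα.1.le hα.2.le

/-- Finite-sample gFWER(k) control of Holm-based intrinsic selection followed by
augmentation: if the p-values are superuniform on the null indices `N`, the set `S ω`
rejected by the Holm procedure at level `α` is augmented by any measurable set `A ω`
of at most `k` indices, then the probability that the augmented selection contains at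
least `k + 1` null indices is at most `α`. -/
theorem holm_augmented_gfwer (m : ℕ) (hm : 1 ≤ m) (α : ℝ) (hα : α ∈ Set.Ioo (0 : ℝ) 1)
    (k : ℕ)
    {Ω : Type*} [MeasurableSpace Ω] (P : Measure Ω) [IsProbabilityMeasure P]
    (N : Finset (Fin m))
    (x : Ω → Fin m → ℝ) (hxmeas : Measurable x)
    (hx01 : ∀ ω i, x ω i ∈ Set.Icc (0 : ℝ) 1)
    (hsuper : ∀ i ∈ N, ∀ u ∈ Set.Icc (0 : ℝ) 1,
      P {ω | x ω i ≤ u} ≤ ENNReal.ofReal u)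
    (A : Ω → Finset (Fin m))
    (hA : @Measurable Ω (Finset (Fin m)) _ ⊤ A)
    (hAk : ∀ ω, (A ω).card ≤ k) :
    P {ω | k + 1 ≤ ((holmRejectSet (x ω) α ∪ A ω) ∩ N).card} ≤ ENNReal.ofReal α :=
  holm_augmented_gfwer_general m α hα k P N x hx01 hsuper A hAk
end
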